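/- arXiv:2601.16063 — 2 statements merged into one kernel-verified Lean document; each statement's English description precedes it below -/
import Mathlib

section
/- Let p ≥ 2, let n > N ≥ 1 be fixed, and let ε_n > 0 be such that the ε_n-ball hypergraph H_n on Ω_n is connected. Then there exists a unique function u_n : Ω_n → ℝ satisfying L^{H_n}_{p,ε_n} u_n(x_i) = 0 for every x_i ∈ Ω_n∖𝒪 and u_n(x_i) = f(x_i) for every x_i ∈ 𝒪. -/
open scoped RealInnerProductSpace ENNReal
open MeasureTheory Metric Filter

noncomputable section

abbrev Euc (d : ℕ) := EuclideanSpace ℝ (Fin d)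

def sigma1 (d : ℕ) [NeZero d] (η : ℝ → ℝ) : ℝ :=
  (1 / 2) * ∫ y in ball (0 : Euc d) 1, η ‖y‖ * (y 0) ^ 2

def sigma2 (d : ℕ) (η : ℝ → ℝ) : ℝ :=
  (1 / 2) * ∫ y in ball (0 : Euc d) 1, η ‖y‖

def kVal (d : ℕ) [NeZero d] (η : ℝ → ℝ) (p : ℝ) : ℝ :=
  Real.sqrt ((p - 2) * sigma1 d η / sigma2 d η)

def etaChi (d : ℕ) (η : ℝ → ℝ) (ε s : ℝ) : ℝ :=
  if s < ε then (ε ^ d)⁻¹ * η (s / ε) else 0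

def Msup {d n : ℕ} (x : Fin n → Euc d) (r : ℝ) (u : Fin n → ℝ) (j : Fin n) : ℝ :=
  sSup (u '' {l | dist (x l) (x j) ≤ r})

def Minf {d n : ℕ} (x : Fin n → Euc d) (r : ℝ) (u : Fin n → ℝ) (j : Fin n) : ℝ :=
  sInf (u '' {l | dist (x l) (x j) ≤ r})

def LH {d : ℕ} [NeZero d] (η : ℝ → ℝ) (p ε : ℝ) {n : ℕ} (x : Fin n → Euc d)
    (u : Fin n → ℝ) (i : Fin n) : ℝ :=
  (1 / (2 * (n : ℝ) * ε ^ 2)) *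
    ∑ j, etaChi d η ε (dist (x i) (x j)) *
      (Msup x (kVal d η p * ε) u j + Minf x (kVal d η p * ε) u j - 2 * u i)

def KernelAssumptions (η : ℝ → ℝ) : Prop :=
  (∀ s ∈ Set.Ici (0:ℝ), 0 ≤ η s) ∧ AntitoneOn η (Set.Ici 0) ∧
    (∃ L : NNReal, LipschitzOnWith L η (Set.Ici 0)) ∧ η 0 ≤ 2 ∧ 1 ≤ η 1

def lapl {d : ℕ} (φ : Euc d → ℝ) (x : Euc d) : ℝ :=
  ∑ i, ⟪fderiv ℝ (gradient φ) x (EuclideanSpace.single i (1:ℝ)), EuclideanSpace.single i (1:ℝ)⟫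

def hessI {d : ℕ} (φ : Euc d → ℝ) (x v : Euc d) : ℝ :=
  ⟪fderiv ℝ (gradient φ) x v, v⟫

def wLap {d : ℕ} (ρ φ : Euc d → ℝ) (x : Euc d) : ℝ :=
  ρ x * lapl φ x + 2 * ⟪gradient ρ x, gradient φ x⟫

def wInfLap {d : ℕ} (ρ φ : Euc d → ℝ) (x : Euc d) : ℝ :=
  ρ x * (‖gradient φ x‖ ^ 2)⁻¹ * hessI φ x (gradient φ x)

def Lp (d : ℕ) [NeZero d] (η : ℝ → ℝ) (p : ℝ) (ρ φ : Euc d → ℝ) (x : Euc d) : ℝ :=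
  sigma1 d η * wLap ρ φ x + (kVal d η p) ^ 2 * sigma2 d η * wInfLap ρ φ x

def MsupC {d : ℕ} (Ω : Set (Euc d)) (φ : Euc d → ℝ) (r : ℝ) (y : Euc d) : ℝ :=
  sSup (φ '' (closedBall y r ∩ closure Ω))

def MinfC {d : ℕ} (Ω : Set (Euc d)) (φ : Euc d → ℝ) (r : ℝ) (y : Euc d) : ℝ :=
  sInf (φ '' (closedBall y r ∩ closure Ω))

def Lpe (d : ℕ) [NeZero d] (η : ℝ → ℝ) (p : ℝ) (Ω : Set (Euc d)) (ρ φ : Euc d → ℝ)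
    (ε : ℝ) (x : Euc d) : ℝ :=
  (1 / (2 * ε ^ 2)) * ∫ y in Ω,
    etaChi d η ε (dist x y) *
      (MsupC Ω φ (kVal d η p * ε) y + MinfC Ω φ (kVal d η p * ε) y - 2 * φ x) * ρ y

def divPLap {d : ℕ} (p : ℝ) (ρ φ : Euc d → ℝ) (x : Euc d) : ℝ :=
  ‖gradient φ x‖ ^ (p - 2) *
    ((ρ x) ^ 2 * lapl φ x + 2 * ρ x * ⟪gradient ρ x, gradient φ x⟫ +
      (p - 2) * (ρ x) ^ 2 * (‖gradient φ x‖ ^ 2)⁻¹ * hessI φ x (gradient φ x))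

def IsViscSubsol {d : ℕ} (p : ℝ) (Ω O : Set (Euc d)) (ρ : Euc d → ℝ) (ν : Euc d → Euc d)
    (u : Euc d → ℝ) : Prop :=
  UpperSemicontinuousOn u (closure Ω) ∧
    ∀ φ : Euc d → ℝ, ContDiff ℝ 2 φ →
      ∀ x₀ ∈ closure Ω \ O,
        (∀ y ∈ closure Ω, y ≠ x₀ → u y - φ y < u x₀ - φ x₀) →
        gradient φ x₀ ≠ 0 →
        (x₀ ∈ Ω → -divPLap p ρ φ x₀ ≤ 0) ∧
        (x₀ ∈ frontier Ω → min (-divPLap p ρ φ x₀) ⟪gradient φ x₀, ν x₀⟫ ≤ 0)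

def IsViscSol {d : ℕ} (p : ℝ) (Ω O : Set (Euc d)) (ρ : Euc d → ℝ) (ν : Euc d → Euc d)
    (u : Euc d → ℝ) : Prop :=
  ContinuousOn u (closure Ω) ∧ IsViscSubsol p Ω O ρ ν u ∧
    IsViscSubsol p Ω O ρ ν (fun x => -u x)

def IsTransportMap {d n : ℕ} (Ω : Set (Euc d)) (ρ : Euc d → ℝ) (x : Fin n → Euc d)
    (T : Euc d → Euc d) : Prop :=
  Measurable T ∧ (∀ y ∈ Ω, T y ∈ Set.range x) ∧
    Measure.map T ((volume.restrict Ω).withDensity fun y => ENNReal.ofReal (ρ y)) =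
      (n : ℝ≥0∞)⁻¹ • ∑ i, Measure.dirac (x i)

def idTnorm {d : ℕ} (Ω : Set (Euc d)) (T : Euc d → Euc d) : ℝ :=
  (essSup (fun y => edist y (T y)) (volume.restrict Ω)).toReal

def muDens {d : ℕ} (Ω : Set (Euc d)) (ρ : Euc d → ℝ) : Measure (Euc d) :=
  (volume.restrict Ω).withDensity fun y => ENNReal.ofReal (ρ y)

def deltaN (d n : ℕ) : ℝ :=
  if d = 2 then (Real.log n) ^ ((3:ℝ)/4) / Real.sqrt n else (Real.log n / n) ^ ((1:ℝ)/d)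

def pts {d N : ℕ} (o : Fin N → Euc d) (xs : ℕ → Euc d) (n : ℕ) : Fin n → Euc d :=
  fun i => if h : (i : ℕ) < N then o ⟨i, h⟩ else xs ((i : ℕ) - N)

def DiscSol {d : ℕ} [NeZero d] (η : ℝ → ℝ) (p ε : ℝ) {N n : ℕ} (o : Fin N → Euc d)
    (f : Fin N → ℝ) (xs : ℕ → Euc d) (u : Fin n → ℝ) : Prop :=
  (∀ i : Fin n, N ≤ (i : ℕ) → LH η p ε (pts o xs n) u i = 0) ∧
  (∀ i : Fin n, ∀ h : (i : ℕ) < N, u i = f ⟨i, h⟩)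


/-!
Clearing the positive factor `1 / (2 n ε²)`, the equation at an unlabeled point says that `u i` is
the weighted average of `(M^{kε} u + M_{kε} u) / 2` over the `ε`-neighbours of `x i`. This
averaging map is monotone and fixes constants, so once the labels are imposed it maps the order
interval between the constants `min f` and `max f` into itself, and Tarski's fixed point theorem
gives a solution.

Uniqueness is a strong comparison principle. If `u - v` attains a positive maximum `t`, pick among
its maximizers one where `u` is largest, say `u = c` there. Subtracting the equations for `u` and
`v` at that point forces `M^{kε} u = M^{kε} v + t` at every neighbour, so `M^{kε} u ≤ c` there;
then the equation for `u` forces `u = c` and `u - v = t` at every neighbour. By connectivity this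
reaches a labeled point, where `u = v`.
-/

open Finset

theorem SimpleGraph.Preconnected.of_adj_closed {V : Type*} {G : SimpleGraph V}
    (hG : G.Preconnected) {P : V → Prop} (hP : ∀ a b, G.Adj a b → P a → P b) {a : V}
    (ha : P a) (b : V) : P b := by
  obtain ⟨q⟩ := hG a b
  revert ha
  induction q with
  | nil => exact id
  | cons h _ ih => exact fun ha => ih (hP _ _ h ha)

theorem Monotone.exists_isFixedPt_of_le {α : Type*} [ConditionallyCompleteLattice α]
    {F : α → α} (hF : Monotone F) {a b : α} (hab : a ≤ b) (ha : a ≤ F a) (hb : F b ≤ b) :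
    ∃ y, Function.IsFixedPt F y := by
  have : Fact (a ≤ b) := ⟨hab⟩
  let G : Set.Icc a b →o Set.Icc a b :=
    ⟨fun y => ⟨F y, ha.trans (hF y.2.1), (hF y.2.2).trans hb⟩, fun _ _ h => hF h⟩
  exact ⟨G.lfp, congrArg Subtype.val G.map_lfp⟩

theorem eq_zero_of_sum_mul_eq_zero {ι : Type*} [Fintype ι] {w a : ι → ℝ} (hw : ∀ j, 0 ≤ w j)
    (ha : ∀ j, 0 < w j → a j ≤ 0) (hsum : ∑ j, w j * a j = 0) {j : ι} (hj : 0 < w j) :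
    a j = 0 := by
  have hterm : ∀ k ∈ univ, w k * a k ≤ 0 := fun k _ => by
    rcases (hw k).eq_or_lt with hk | hk
    · rw [← hk, zero_mul]
    · exact mul_nonpos_of_nonneg_of_nonpos hk.le (ha k hk)
  exact (mul_eq_zero.mp ((sum_eq_zero_iff_of_nonpos hterm).mp hsum j (mem_univ j))).resolve_left
    hj.ne'

section Kernel

variable {η : ℝ → ℝ} {d : ℕ} {ε s : ℝ}

theorem KernelAssumptions.etaChi_nonneg (hη : KernelAssumptions η) (hε : 0 < ε) (hs : 0 ≤ s) :
    0 ≤ etaChi d η ε s := by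
  unfold etaChi
  split
  · exact mul_nonneg (by positivity) (hη.1 _ (div_nonneg hs hε.le))
  · exact le_rfl

theorem KernelAssumptions.etaChi_pos (hη : KernelAssumptions η) (hε : 0 < ε) (hs : 0 ≤ s)
    (hsε : s < ε) : 0 < etaChi d η ε s := by
  rw [etaChi, if_pos hsε]
  have hη1 : 1 ≤ η 1 := hη.2.2.2.2
  have hanti : η 1 ≤ η (s / ε) :=
    hη.2.1 (div_nonneg hs hε.le) (Set.mem_Ici.mpr zero_le_one) ((div_le_one hε).mpr hsε.le)
  exact mul_pos (by positivity) (by linarith)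

theorem KernelAssumptions.etaChi_pos_of_adj (hη : KernelAssumptions η) (hε : 0 < ε) {n : ℕ}
    {x : Fin n → Euc d} {i j : Fin n}
    (hij : (SimpleGraph.fromRel fun i j : Fin n => dist (x i) (x j) < ε).Adj i j) :
    0 < etaChi d η ε (dist (x i) (x j)) := by
  rw [SimpleGraph.fromRel_adj, dist_comm (x j)] at hij
  exact hη.etaChi_pos hε dist_nonneg (hij.2.elim id id)

end Kernel

section Extremes

variable {d n : ℕ} (x : Fin n → Euc d) {r : ℝ} (u v : Fin n → ℝ) (j : Fin n)

theorem exists_eq_Msup (hr : 0 ≤ r) : ∃ l, dist (x l) (x j) ≤ r ∧ u l = Msup x r u j :=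
  Set.Nonempty.csSup_mem (s := u '' {l | dist (x l) (x j) ≤ r})
    (Set.Nonempty.image u ⟨j, show dist (x j) (x j) ≤ r by simpa using hr⟩) (Set.toFinite _)

theorem exists_eq_Minf (hr : 0 ≤ r) : ∃ l, dist (x l) (x j) ≤ r ∧ u l = Minf x r u j :=
  Set.Nonempty.csInf_mem (s := u '' {l | dist (x l) (x j) ≤ r})
    (Set.Nonempty.image u ⟨j, show dist (x j) (x j) ≤ r by simpa using hr⟩) (Set.toFinite _)

theorem le_Msup {l : Fin n} (hl : dist (x l) (x j) ≤ r) : u l ≤ Msup x r u j :=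
  le_csSup (Set.toFinite _).bddAbove ⟨l, hl, rfl⟩

theorem Minf_le {l : Fin n} (hl : dist (x l) (x j) ≤ r) : Minf x r u j ≤ u l :=
  csInf_le (Set.toFinite _).bddBelow ⟨l, hl, rfl⟩

theorem self_le_Msup (hr : 0 ≤ r) : u j ≤ Msup x r u j :=
  le_Msup x u j (by simpa using hr)

theorem Minf_le_self (hr : 0 ≤ r) : Minf x r u j ≤ u j :=
  Minf_le x u j (by simpa using hr)

theorem Msup_le_Msup_add (hr : 0 ≤ r) {t : ℝ} (h : ∀ l, u l ≤ v l + t) :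
    Msup x r u j ≤ Msup x r v j + t := by
  obtain ⟨l, hl, hul⟩ := exists_eq_Msup x u j hr
  linarith [h l, le_Msup x v j hl]

theorem Minf_le_Minf_add (hr : 0 ≤ r) {t : ℝ} (h : ∀ l, u l ≤ v l + t) :
    Minf x r u j ≤ Minf x r v j + t := by
  obtain ⟨l, hl, hvl⟩ := exists_eq_Minf x v j hr
  linarith [h l, Minf_le x u j hl]

theorem Msup_const (hr : 0 ≤ r) (c : ℝ) : Msup x r (fun _ => c) j = c :=
  (exists_eq_Msup x _ j hr).choose_spec.2.symm

theorem Minf_const (hr : 0 ≤ r) (c : ℝ) : Minf x r (fun _ => c) j = c :=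
  (exists_eq_Minf x _ j hr).choose_spec.2.symm

end Extremes

section HypergraphLaplacian

variable {d n : ℕ} (w : Fin n → Fin n → ℝ) (x : Fin n → Euc d) (r : ℝ)

def hypLap (u : Fin n → ℝ) (i : Fin n) : ℝ :=
  ∑ j, w i j * (Msup x r u j + Minf x r u j - 2 * u i)

def hypAvg (u : Fin n → ℝ) (i : Fin n) : ℝ :=
  (∑ j, w i j * (Msup x r u j + Minf x r u j)) / (2 * ∑ j, w i j)

variable {w x r}

theorem LH_eq_zero_iff [NeZero d] {η : ℝ → ℝ} {p ε : ℝ} (hε : 0 < ε) (u : Fin n → ℝ)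
    (i : Fin n) :
    LH η p ε x u i = 0 ↔
      hypLap (fun i j => etaChi d η ε (dist (x i) (x j))) x (kVal d η p * ε) u i = 0 := by
  have hn : (0 : ℝ) < n := by exact_mod_cast i.pos
  rw [LH, mul_eq_zero, or_iff_right (by positivity), hypLap]

theorem hypLap_eq_mul_sub {u : Fin n → ℝ} {i : Fin n} (hS : ∑ j, w i j ≠ 0) :
    hypLap w x r u i = 2 * (∑ j, w i j) * (hypAvg w x r u i - u i) := by
  rw [hypLap, hypAvg, mul_sub, mul_div_cancel₀ _ (mul_ne_zero two_ne_zero hS), mul_assoc 2,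
    sum_mul, mul_sum, ← sum_sub_distrib]
  exact sum_congr rfl fun j _ => by ring

theorem hypAvg_mono (hr : 0 ≤ r) (hw : ∀ i j, 0 ≤ w i j) : Monotone (hypAvg w x r) :=
  fun u v huv i => by
    have hle : ∀ l, u l ≤ v l + 0 := fun l => by simpa using huv l
    refine div_le_div_of_nonneg_right (sum_le_sum fun j _ => ?_)
      (mul_nonneg zero_le_two (sum_nonneg fun j _ => hw i j))
    have hM := Msup_le_Msup_add x u v j hr hle
    have hm := Minf_le_Minf_add x u v j hr hle
    exact mul_le_mul_of_nonneg_left (by linarith) (hw i j)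

theorem hypAvg_const (hr : 0 ≤ r) {i : Fin n} (hS : ∑ j, w i j ≠ 0) (c : ℝ) :
    hypAvg w x r (fun _ => c) i = c := by
  simp only [hypAvg, Msup_const x _ hr, Minf_const x _ hr]
  rw [← sum_mul, div_eq_iff (mul_ne_zero two_ne_zero hS)]
  ring

theorem exists_hypLap_eq_zero [Nonempty (Fin n)] (hr : 0 ≤ r) (hw : ∀ i j, 0 ≤ w i j)
    (hdiag : ∀ i, 0 < w i i) (B : Set (Fin n)) (f : Fin n → ℝ) :
    ∃ u, (∀ i ∉ B, hypLap w x r u i = 0) ∧ ∀ i ∈ B, u i = f i := by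
  classical
  have hS : ∀ i, ∑ j, w i j ≠ 0 := fun i =>
    (sum_pos' (fun j _ => hw i j) ⟨i, mem_univ i, hdiag i⟩).ne'
  let F : (Fin n → ℝ) → Fin n → ℝ := fun u i => if i ∈ B then f i else hypAvg w x r u i
  have hF : Monotone F := fun u v huv i => by
    by_cases hi : i ∈ B
    · simp only [F, hi, if_true, le_refl]
    · simpa only [F, hi, if_false] using hypAvg_mono hr hw huv i
  have hbdd := Set.finite_range f
  obtain ⟨u, hu⟩ := hF.exists_isFixedPt_of_le (a := fun _ => ⨅ i, f i) (b := fun _ => ⨆ i, f i)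
    (fun _ => ciInf_le_ciSup hbdd.bddBelow hbdd.bddAbove)
    (fun i => by
      by_cases hi : i ∈ B
      · simpa only [F, hi, if_true] using ciInf_le hbdd.bddBelow i
      · simp only [F, hi, if_false, hypAvg_const hr (hS i), le_refl])
    (fun i => by
      by_cases hi : i ∈ B
      · simpa only [F, hi, if_true] using le_ciSup hbdd.bddAbove i
      · simp only [F, hi, if_false, hypAvg_const hr (hS i), le_refl])
  refine ⟨u, fun i hi => ?_, fun i hi => ?_⟩
  · have hfix : hypAvg w x r u i = u i := by simpa only [F, hi, if_false] using congrFun hu i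
    rw [hypLap_eq_mul_sub (hS i), hfix, sub_self, mul_zero]
  · simpa only [F, hi, if_true] using (congrFun hu i).symm

theorem Msup_eq_Msup_add_of_hypLap_eq (hr : 0 ≤ r) (hw : ∀ i j, 0 ≤ w i j)
    {u v : Fin n → ℝ} {t : ℝ} {i : Fin n} (hle : ∀ l, u l ≤ v l + t) (hi : u i = v i + t)
    (heq : hypLap w x r u i = hypLap w x r v i) {j : Fin n} (hj : 0 < w i j) :
    Msup x r u j = Msup x r v j + t := by
  have hM := fun k => Msup_le_Msup_add x u v k hr hle
  have hm := fun k => Minf_le_Minf_add x u v k hr hle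
  have hsum : ∑ k, w i k *
      ((Msup x r u k - Msup x r v k - t) + (Minf x r u k - Minf x r v k - t)) = 0 := by
    rw [← sub_eq_zero.mpr heq, hypLap, hypLap, ← sum_sub_distrib]
    exact sum_congr rfl fun k _ => by rw [hi]; ring
  have := eq_zero_of_sum_mul_eq_zero (hw i) (fun k _ => by linarith [hM k, hm k]) hsum hj
  linarith [hM j, hm j]

theorem eq_of_hypLap_eq_zero_of_Msup_le (hr : 0 ≤ r) (hw : ∀ i j, 0 ≤ w i j)
    {u : Fin n → ℝ} {i : Fin n} (hu : hypLap w x r u i = 0)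
    (hM : ∀ j, 0 < w i j → Msup x r u j ≤ u i) {j : Fin n} (hj : 0 < w i j) : u j = u i := by
  have hmM := fun k => (Minf_le_self x u k hr).trans (self_le_Msup x u k hr)
  have := eq_zero_of_sum_mul_eq_zero (hw i) (fun k hk => by linarith [hM k hk, hmM k]) hu hj
  linarith [hM j hj, Minf_le_self x u j hr, self_le_Msup x u j hr]

theorem le_of_hypLap_eq_zero (hr : 0 ≤ r) (hw : ∀ i j, 0 ≤ w i j) {G : SimpleGraph (Fin n)}
    (hG : G.Preconnected) (hGw : ∀ i j, G.Adj i j → 0 < w i j) {B : Set (Fin n)}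
    (hB : B.Nonempty) {u v : Fin n → ℝ} (hu : ∀ i ∉ B, hypLap w x r u i = 0)
    (hv : ∀ i ∉ B, hypLap w x r v i = 0) (hBuv : ∀ i ∈ B, u i = v i) : u ≤ v := by
  by_contra hlt
  obtain ⟨i₀, hi₀⟩ : ∃ i, v i < u i := by simpa [Pi.le_def] using hlt
  set t := univ.sup' ⟨i₀, mem_univ _⟩ (u - v)
  have ht : ∀ l, u l ≤ v l + t := fun l => by
    have := le_sup' (u - v) (mem_univ l)
    simp only [Pi.sub_apply] at this
    linarith
  have htpos : 0 < t := by linarith [ht i₀]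
  set A := univ.filter fun l => u l = v l + t
  have hA : A.Nonempty := by
    obtain ⟨l, -, hl⟩ := exists_mem_eq_sup' ⟨i₀, mem_univ _⟩ (u - v)
    exact ⟨l, mem_filter.mpr ⟨mem_univ l, by simp only [Pi.sub_apply] at hl; linarith⟩⟩
  set c := A.sup' hA u
  let P : Fin n → Prop := fun l => u l = v l + t ∧ u l = c
  have hPB : ∀ l, P l → l ∉ B := fun l hl hlB => by linarith [hBuv l hlB, hl.1]
  have hstep : ∀ a b, G.Adj a b → P a → P b := by
    rintro a b hab ⟨hat, hac⟩
    have hMsup : ∀ j, 0 < w a j → Msup x r u j = Msup x r v j + t := fun j hj =>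
      Msup_eq_Msup_add_of_hypLap_eq hr hw ht hat (by rw [hu a (hPB a ⟨hat, hac⟩),
        hv a (hPB a ⟨hat, hac⟩)]) hj
    have hMc : ∀ j, 0 < w a j → Msup x r u j ≤ u a := fun j hj => by
      obtain ⟨l, hl, hul⟩ := exists_eq_Msup x u j hr
      have hlA : l ∈ A := mem_filter.mpr
        ⟨mem_univ l, le_antisymm (ht l) (by linarith [hMsup j hj, le_Msup x v j hl])⟩
      exact hul ▸ hac ▸ le_sup' u hlA
    have hub : u b = c := hac ▸ eq_of_hypLap_eq_zero_of_Msup_le hr hw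
      (hu a (hPB a ⟨hat, hac⟩)) hMc (hGw a b hab)
    refine ⟨le_antisymm (ht b) ?_, hub⟩
    linarith [self_le_Msup x v b hr, hMsup b (hGw a b hab), hMc b (hGw a b hab)]
  obtain ⟨i₁, hi₁A, hi₁⟩ := exists_mem_eq_sup' hA u
  obtain ⟨b, hb⟩ := hB
  exact hPB b (hG.of_adj_closed hstep ⟨(mem_filter.mp hi₁A).2, hi₁.symm⟩ b) hb

end HypergraphLaplacian

theorem stmt0_general {d : ℕ} [NeZero d]
    (η : ℝ → ℝ) (hη : KernelAssumptions η)
    (p : ℝ)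
    (n N : ℕ) (hN : 1 ≤ N) (hNn : N < n)
    (x : Fin n → Euc d)
    (f : Fin n → ℝ)
    (ε : ℝ) (hε : 0 < ε)
    (hconn : (SimpleGraph.fromRel fun i j : Fin n => dist (x i) (x j) < ε).Connected) :
    ∃! u : Fin n → ℝ,
      (∀ i : Fin n, N ≤ (i : ℕ) → LH η p ε x u i = 0) ∧
      ∀ i : Fin n, (i : ℕ) < N → u i = f i := by
  have : Nonempty (Fin n) := ⟨⟨0, by omega⟩⟩
  set w : Fin n → Fin n → ℝ := fun i j => etaChi d η ε (dist (x i) (x j))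
  set B : Set (Fin n) := {i | (i : ℕ) < N}
  have hr : 0 ≤ kVal d η p * ε := mul_nonneg (Real.sqrt_nonneg _) hε.le
  have hw : ∀ i j, 0 ≤ w i j := fun _ _ => hη.etaChi_nonneg hε dist_nonneg
  have hdiag : ∀ i, 0 < w i i := fun i => by simpa [w] using hη.etaChi_pos hε le_rfl hε
  have hsol : ∀ u, (∀ i : Fin n, N ≤ (i : ℕ) → LH η p ε x u i = 0) ↔
      ∀ i ∉ B, hypLap w x (kVal d η p * ε) u i = 0 :=
    fun u => forall_congr' fun i => by rw [LH_eq_zero_iff hε]; simp [B, w]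
  obtain ⟨u, hu, huB⟩ := exists_hypLap_eq_zero (x := x) hr hw hdiag B f
  have hcomp := fun {u v : Fin n → ℝ} => le_of_hypLap_eq_zero (x := x) hr hw
    hconn.preconnected (fun _ _ => hη.etaChi_pos_of_adj hε) (B := B)
    ⟨⟨0, by omega⟩, show 0 < N by omega⟩ (u := u) (v := v)
  refine ⟨u, ⟨(hsol u).2 hu, huB⟩, fun v ⟨hv, hvB⟩ => le_antisymm ?_ ?_⟩
  · exact hcomp ((hsol v).1 hv) hu fun i hi => (hvB i hi).trans (huB i hi).symm
  · exact hcomp hu ((hsol v).1 hv) fun i hi => (huB i hi).trans (hvB i hi).symm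

theorem stmt0 {d : ℕ} [NeZero d] (hd : 2 ≤ d)
    (Ω : Set (Euc d)) (hΩb : Bornology.IsBounded Ω) (hΩconn : IsConnected Ω) (hΩo : IsOpen Ω)
    (η : ℝ → ℝ) (hη : KernelAssumptions η)
    (p : ℝ) (hp : 2 ≤ p)
    (n N : ℕ) (hN : 1 ≤ N) (hNn : N < n)
    (x : Fin n → Euc d) (hxΩ : ∀ i, x i ∈ Ω) (hxinj : Function.Injective x)
    (f : Fin n → ℝ)
    (ε : ℝ) (hε : 0 < ε)
    (hconn : (SimpleGraph.fromRel fun i j : Fin n => dist (x i) (x j) < ε).Connected) :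
    ∃! u : Fin n → ℝ,
      (∀ i : Fin n, N ≤ (i : ℕ) → LH η p ε x u i = 0) ∧
      ∀ i : Fin n, (i : ℕ) < N → u i = f i :=
  stmt0_general η hη p n N hN hNn x f ε hε hconn
end
end

section
/- Let U ⊂ ℝ^d be open, let φ be three times continuously differentiable on U, let x ∈ U with ∇φ(x) ≠ 0, and let k ≥ 0. Then there exist constants C > 0 and ε₀ > 0 such that for every ε ∈ (0, ε₀) with B̄(x, (1+k)ε) ⊂ U and every ŷ ∈ B̄(0,1): | max_{ẑ ∈ B̄(0,1)} φ(x + ε(ŷ + kẑ)) + min_{ẑ ∈ B̄(0,1)} φ(x + ε(ŷ + kẑ)) − 2φ(x) − 2ε⟨∇φ(x), ŷ⟩ − ε²(⟨D²φ(x)ŷ, ŷ⟩ + k²Δ_∞φ(x)) | ≤ Cε³, where Δ_∞φ(x) := |∇φ(x)|^{−2}⟨D²φ(x)∇φ(x), ∇φ(x)⟩. -/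
open scoped RealInnerProductSpace ENNReal
open MeasureTheory Metric Filter

noncomputable section

/-!
By Taylor's formula, up to `O(ε³)` uniformly on the ball, `φ (x + w)` is `φ x + q w` with
`q w = ⟪g, w⟫ + D²φ(x)(w, w) / 2`, `g = ∇φ(x)`. On the ball of radius `ρ` around `a`, the linear
part of `q` is largest at `a + ρ n`, `n = g / ‖g‖`, and at `a + ρ z` it has lost at least
`ρ ‖g‖ ‖z - n‖² / 2`, whereas the quadratic part can have gained at most `O(ρ R ‖z - n‖)`,
`R = ‖a‖ + ρ`. Completing the square, `max q = q (a + ρ n) + O(ρ R²)`, and symmetrically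
`min q = q (a - ρ n) + O(ρ R²)`. In `q (a + ρ n) + q (a - ρ n)` the terms odd in `n` cancel, which
leaves `2 ⟪g, a⟫ + D²φ(x)(a, a) + ρ² D²φ(x)(n, n)`; take `a = ε ŷ` and `ρ = k ε`.
-/

open Asymptotics Filter Set Topology InnerProductSpace

section Taylor

variable {E F : Type*} [NormedAddCommGroup E] [NormedSpace ℝ E]
  [NormedAddCommGroup F] [NormedSpace ℝ F] [CompleteSpace F]

theorem ContDiffAt.isBigO_sub_taylor_two {f : E → F} {x : E} (hf : ContDiffAt ℝ 3 f x) :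
    (fun y => f (x + y) - f x - fderiv ℝ f x y - (2:ℝ)⁻¹ • fderiv ℝ (fderiv ℝ f) x y y)
      =O[𝓝 0] fun y => ‖y‖ ^ 3 := by
  set K := ‖iteratedFDeriv ℝ 3 f x‖ + 1
  have hev : ∀ᶠ z in 𝓝 x, ContDiffAt ℝ 3 f z ∧ ‖iteratedFDeriv ℝ 3 f z‖ < K :=
    (hf.eventually (by simp)).and <| (hf.continuousAt_iteratedFDeriv le_rfl).norm.eventually_lt
      continuousAt_const (lt_add_one _)
  obtain ⟨δ, hδ, hball⟩ := Metric.eventually_nhds_iff_ball.1 hev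
  refine IsBigO.of_bound K ?_
  filter_upwards [ball_mem_nhds 0 hδ] with y hy
  have hseg : ∀ t ∈ Icc (0:ℝ) 1, x + t • y ∈ ball x δ := by
    intro t ht
    rw [mem_ball_zero_iff] at hy
    rw [mem_ball_iff_norm, add_sub_cancel_left, norm_smul, Real.norm_of_nonneg ht.1]
    exact (mul_le_of_le_one_left (norm_nonneg y) ht.2).trans_lt hy
  have hrem : ∀ t ∈ uIoc (0:ℝ) 1,
      ‖(1 - t) ^ 2 • iteratedFDeriv ℝ 3 f (x + t • y) (fun _ => y)‖ ≤ K * ‖y‖ ^ 3 := by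
    intro t ht
    rw [uIoc_of_le zero_le_one] at ht
    have h1t : ‖(1 - t) ^ 2‖ ≤ 1 := by
      rw [Real.norm_of_nonneg (sq_nonneg _)]
      exact pow_le_one₀ (by linarith [ht.2]) (by linarith [ht.1])
    calc ‖(1 - t) ^ 2 • iteratedFDeriv ℝ 3 f (x + t • y) (fun _ => y)‖
        ≤ 1 * (‖iteratedFDeriv ℝ 3 f (x + t • y)‖ * ‖y‖ ^ 3) := by
          rw [norm_smul]
          refine mul_le_mul h1t ?_ (norm_nonneg _) zero_le_one
          simpa using (iteratedFDeriv ℝ 3 f (x + t • y)).le_opNorm fun _ => y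
      _ ≤ K * ‖y‖ ^ 3 := by
          rw [one_mul]
          gcongr
          exact (hball _ (hseg t (Ioc_subset_Icc_self ht))).2.le
  rw [map_add_eq_sum_add_integral_iteratedFDeriv (n := 2) fun t ht => (hball _ (hseg t ht)).1]
  calc _ = ‖(2:ℝ)⁻¹ • ∫ t in (0:ℝ)..1,
        (1 - t) ^ 2 • iteratedFDeriv ℝ 3 f (x + t • y) (fun _ => y)‖ := by
        simp [Finset.sum_range_succ, iteratedFDeriv_two_apply]
        abel_nf
    _ ≤ 1 * (K * ‖y‖ ^ 3 * |1 - 0|) := by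
        rw [norm_smul]
        gcongr
        · norm_num
        · exact intervalIntegral.norm_integral_le_of_norm_le_const hrem
    _ = K * ‖‖y‖ ^ 3‖ := by simp

end Taylor

theorem abs_csSup_image_sub_le {α : Type*} {K : Set α} {f P : α → ℝ} {z₀ : α} {δ η : ℝ}
    (hz₀ : z₀ ∈ K) (hfP : ∀ z ∈ K, |f z - P z| ≤ δ) (hP : ∀ z ∈ K, P z ≤ P z₀ + η) :
    |sSup (f '' K) - P z₀| ≤ δ + η := by
  have hη : 0 ≤ η := by linarith [hP z₀ hz₀]
  have hup : ∀ a ∈ f '' K, a ≤ P z₀ + (δ + η) := by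
    rintro _ ⟨z, hz, rfl⟩
    linarith [(abs_le.1 (hfP z hz)).2, hP z hz]
  have hz₀f : f z₀ ∈ f '' K := mem_image_of_mem f hz₀
  rw [abs_le]
  constructor
  · linarith [le_csSup ⟨_, hup⟩ hz₀f, (abs_le.1 (hfP z₀ hz₀)).1]
  · linarith [csSup_le ⟨_, hz₀f⟩ hup]

theorem abs_csInf_image_sub_le {α : Type*} {K : Set α} {f P : α → ℝ} {z₀ : α} {δ η : ℝ}
    (hz₀ : z₀ ∈ K) (hfP : ∀ z ∈ K, |f z - P z| ≤ δ) (hP : ∀ z ∈ K, P z₀ - η ≤ P z) :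
    |sInf (f '' K) - P z₀| ≤ δ + η := by
  have h := abs_csSup_image_sub_le (f := -f) (P := -P) (η := η) hz₀
    (fun z hz => by simpa [abs_sub_comm, neg_add_eq_sub] using hfP z hz)
    (fun z hz => by simp only [Pi.neg_apply]; linarith [hP z hz])
  have himage : (-f) '' K = -(f '' K) := by rw [← image_neg_eq_neg, image_image]; rfl
  rwa [himage, Real.sSup_neg, Pi.neg_apply, ← abs_neg, neg_sub, sub_neg_eq_add, add_comm] at h

section Normed

variable {E F : Type*} [NormedAddCommGroup E] [NormedSpace ℝ E]
  [NormedAddCommGroup F] [NormedSpace ℝ F]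

theorem norm_add_smul_le {a v : E} {ρ : ℝ} (hρ : 0 ≤ ρ) (hv : ‖v‖ ≤ 1) :
    ‖a + ρ • v‖ ≤ ‖a‖ + ρ := by
  refine (norm_add_le _ _).trans ?_
  rw [norm_smul, Real.norm_of_nonneg hρ]
  nlinarith [norm_nonneg v]

theorem ContinuousLinearMap.norm_apply_self_sub_apply_self_le (B : E →L[ℝ] E →L[ℝ] F)
    (u v : E) :
    ‖B u u - B v v‖ ≤ ‖B‖ * ‖u - v‖ * (‖u‖ + ‖v‖) := by
  have hsplit : B u u - B v v = B (u - v) u + B v (u - v) := by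
    simp only [map_sub, sub_apply]
    abel
  calc ‖B u u - B v v‖ ≤ ‖B (u - v) u‖ + ‖B v (u - v)‖ := hsplit ▸ norm_add_le _ _
    _ ≤ ‖B‖ * ‖u - v‖ * ‖u‖ + ‖B‖ * ‖v‖ * ‖u - v‖ :=
        add_le_add (B.le_opNorm₂ _ _) (B.le_opNorm₂ _ _)
    _ = ‖B‖ * ‖u - v‖ * (‖u‖ + ‖v‖) := by ring

end Normed

section InnerProduct

variable {E : Type*} [NormedAddCommGroup E] [InnerProductSpace ℝ E]

theorem real_inner_le_one_sub_norm_sub_sq {n z : E} (hn : ‖n‖ = 1) (hz : ‖z‖ ≤ 1) :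
    ⟪n, z⟫ ≤ 1 - ‖z - n‖ ^ 2 / 2 := by
  rw [norm_sub_sq_real, hn, real_inner_comm]
  nlinarith [norm_nonneg z]

theorem inner_fderiv_gradient_apply [CompleteSpace E] {f : E → ℝ} {x : E}
    (hf : DifferentiableAt ℝ (fderiv ℝ f) x) (v w : E) :
    ⟪fderiv ℝ (gradient f) x v, w⟫ = fderiv ℝ (fderiv ℝ f) x v w := by
  let A : StrongDual ℝ E →L[ℝ] E :=
    (toDual ℝ E).symm.toContinuousLinearEquiv.toContinuousLinearMap
  have hA : HasFDerivAt (gradient f) (A.comp (fderiv ℝ (fderiv ℝ f) x)) x :=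
    A.hasFDerivAt.comp x hf.hasFDerivAt
  rw [hA.fderiv]
  exact toDual_symm_apply

def quadraticModel (g : E) (B : E →L[ℝ] E →L[ℝ] ℝ) (w : E) : ℝ :=
  ⟪g, w⟫ + B w w / 2

theorem ContDiffAt.exists_abs_sub_quadraticModel_le [CompleteSpace E] {φ : E → ℝ} {x : E}
    (hφ : ContDiffAt ℝ 3 φ x) :
    ∃ L > (0:ℝ), ∃ r > (0:ℝ), ∀ w : E, ‖w‖ < r →
      |φ (x + w) - φ x - quadraticModel (gradient φ x) (fderiv ℝ (fderiv ℝ φ) x) w| ≤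
        L * ‖w‖ ^ 3 := by
  obtain ⟨L, hL, hO⟩ := hφ.isBigO_sub_taylor_two.exists_pos
  obtain ⟨r, hr, h⟩ := Metric.eventually_nhds_iff.1 hO.bound
  refine ⟨L, hL, r, hr, fun w hw => ?_⟩
  have hgrad : fderiv ℝ φ x w = ⟪gradient φ x, w⟫ := toDual_symm_apply.symm
  have h := h (by simpa using hw)
  rw [Real.norm_eq_abs, norm_pow, norm_norm, smul_eq_mul, hgrad] at h
  calc _ = |φ (x + w) - φ x - ⟪gradient φ x, w⟫ - 2⁻¹ * fderiv ℝ (fderiv ℝ φ) x w w| := by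
        rw [quadraticModel]; ring_nf
    _ ≤ L * ‖w‖ ^ 3 := h

theorem quadraticModel_neg (g : E) (B : E →L[ℝ] E →L[ℝ] ℝ) (w : E) :
    quadraticModel (-g) (-B) w = -quadraticModel g B w := by
  simp only [quadraticModel, inner_neg_left, neg_apply]
  ring

theorem quadraticModel_add_smul_add_quadraticModel_add_smul_neg (g : E)
    (B : E →L[ℝ] E →L[ℝ] ℝ) (a : E) (ρ : ℝ) :
    quadraticModel g B (a + ρ • (‖g‖⁻¹ • g)) + quadraticModel g B (a + ρ • -(‖g‖⁻¹ • g)) =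
      2 * ⟪g, a⟫ + B a a + ρ ^ 2 * ((‖g‖ ^ 2)⁻¹ * B g g) := by
  simp only [quadraticModel, map_add, map_smul, map_neg, inner_add_right, inner_neg_right,
    real_inner_smul_right, add_apply, neg_apply, smul_apply, smul_eq_mul]
  ring

theorem quadraticModel_add_smul_le (B : E →L[ℝ] E →L[ℝ] ℝ) {g n : E} {c : ℝ} (hc : 0 < c)
    (hn : ‖n‖ = 1) (hg : g = c • n) (a : E) {ρ : ℝ} (hρ : 0 ≤ ρ) {z : E} (hz : ‖z‖ ≤ 1) :
    quadraticModel g B (a + ρ • z) ≤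
      quadraticModel g B (a + ρ • n) + ρ * (‖a‖ + ρ) ^ 2 * ‖B‖ ^ 2 / (2 * c) := by
  set t := ‖z - n‖
  have hlin : ⟪g, a + ρ • z⟫ - ⟪g, a + ρ • n⟫ ≤ -(ρ * c * t ^ 2 / 2) := by
    have h := real_inner_le_one_sub_norm_sub_sq hn hz
    have hexp : ⟪g, a + ρ • z⟫ - ⟪g, a + ρ • n⟫ = ρ * c * (⟪n, z⟫ - 1) := by
      simp only [hg, inner_add_right, real_inner_smul_left, real_inner_smul_right,
        real_inner_self_eq_norm_sq, hn]
      ring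
    rw [hexp]
    nlinarith [mul_nonneg hρ hc.le]
  have hquad : B (a + ρ • z) (a + ρ • z) - B (a + ρ • n) (a + ρ • n) ≤
      2 * ρ * ‖B‖ * (‖a‖ + ρ) * t := by
    have h := (le_abs_self _).trans (B.norm_apply_self_sub_apply_self_le (a + ρ • z) (a + ρ • n))
    have hdiff : ‖a + ρ • z - (a + ρ • n)‖ = ρ * t := by
      rw [add_sub_add_left_eq_sub, ← smul_sub, norm_smul, Real.norm_of_nonneg hρ]
    rw [hdiff] at h
    have hsum :=
      add_le_add (norm_add_smul_le (a := a) hρ hz) (norm_add_smul_le (a := a) hρ hn.le)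
    calc _ ≤ ‖B‖ * (ρ * t) * (‖a + ρ • z‖ + ‖a + ρ • n‖) := h
      _ ≤ ‖B‖ * (ρ * t) * (2 * (‖a‖ + ρ)) := by gcongr; linarith
      _ = 2 * ρ * ‖B‖ * (‖a‖ + ρ) * t := by ring
  have hsq : ρ * (‖a‖ + ρ) ^ 2 * ‖B‖ ^ 2 / (2 * c) -
      (-(ρ * c * t ^ 2 / 2) + ρ * ‖B‖ * (‖a‖ + ρ) * t) =
        ρ / (2 * c) * (c * t - ‖B‖ * (‖a‖ + ρ)) ^ 2 := by
    field_simp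
    ring
  have hsq_nonneg : 0 ≤ ρ / (2 * c) * (c * t - ‖B‖ * (‖a‖ + ρ)) ^ 2 := by positivity
  simp only [quadraticModel]
  linarith

theorem le_quadraticModel_add_smul (B : E →L[ℝ] E →L[ℝ] ℝ) {g n : E} {c : ℝ} (hc : 0 < c)
    (hn : ‖n‖ = 1) (hg : g = c • n) (a : E) {ρ : ℝ} (hρ : 0 ≤ ρ) {z : E} (hz : ‖z‖ ≤ 1) :
    quadraticModel g B (a + ρ • -n) - ρ * (‖a‖ + ρ) ^ 2 * ‖B‖ ^ 2 / (2 * c) ≤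
      quadraticModel g B (a + ρ • z) := by
  have h := quadraticModel_add_smul_le (-B) (g := -g) hc (by rwa [norm_neg])
    (by rw [hg, smul_neg]) a hρ hz
  rw [quadraticModel_neg, quadraticModel_neg, ContinuousLinearMap.opNorm_neg] at h
  linarith

theorem abs_sSup_add_sInf_sub_le_of_taylor {φ : E → ℝ} {x g : E} (hg : g ≠ 0)
    {B : E →L[ℝ] E →L[ℝ] ℝ} {L r : ℝ} (hL : 0 ≤ L)
    (hT : ∀ w : E, ‖w‖ < r → |φ (x + w) - φ x - quadraticModel g B w| ≤ L * ‖w‖ ^ 3)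
    (a : E) {ρ : ℝ} (hρ : 0 ≤ ρ) (hr : ‖a‖ + ρ < r) :
    |sSup ((fun z => φ (x + (a + ρ • z))) '' closedBall 0 1) +
        sInf ((fun z => φ (x + (a + ρ • z))) '' closedBall 0 1) -
        2 * φ x - 2 * ⟪g, a⟫ - (B a a + ρ ^ 2 * ((‖g‖ ^ 2)⁻¹ * B g g))| ≤
      2 * (L * (‖a‖ + ρ) ^ 3 + ρ * (‖a‖ + ρ) ^ 2 * ‖B‖ ^ 2 / (2 * ‖g‖)) := by
  have hgpos : 0 < ‖g‖ := norm_pos_iff.2 hg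
  set n := ‖g‖⁻¹ • g
  have hn : ‖n‖ = 1 := norm_smul_inv_norm hg
  have hgn : g = ‖g‖ • n := (smul_inv_smul₀ hgpos.ne' g).symm
  have hfP : ∀ z ∈ closedBall (0 : E) 1,
      |φ (x + (a + ρ • z)) - (φ x + quadraticModel g B (a + ρ • z))| ≤ L * (‖a‖ + ρ) ^ 3 := by
    intro z hz
    have hw := norm_add_smul_le (a := a) hρ (mem_closedBall_zero_iff.1 hz)
    calc _ = |φ (x + (a + ρ • z)) - φ x - quadraticModel g B (a + ρ • z)| := by ring_nf
      _ ≤ L * ‖a + ρ • z‖ ^ 3 := hT _ (hw.trans_lt hr)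
      _ ≤ L * (‖a‖ + ρ) ^ 3 := by gcongr
  set η := ρ * (‖a‖ + ρ) ^ 2 * ‖B‖ ^ 2 / (2 * ‖g‖)
  have hsup := abs_csSup_image_sub_le (z₀ := n) (η := η) (by simpa using hn.le) hfP
    fun z hz => by
      linarith [quadraticModel_add_smul_le B hgpos hn hgn a hρ (mem_closedBall_zero_iff.1 hz)]
  have hinf := abs_csInf_image_sub_le (z₀ := -n) (η := η) (by simpa using hn.le) hfP
    fun z hz => by
      linarith [le_quadraticModel_add_smul B hgpos hn hgn a hρ (mem_closedBall_zero_iff.1 hz)]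
  have hsum := quadraticModel_add_smul_add_quadraticModel_add_smul_neg g B a ρ
  rw [abs_le] at hsup hinf ⊢
  constructor <;> linarith [hsup.1, hsup.2, hinf.1, hinf.2]

end InnerProduct

theorem stmt13 {d : ℕ} (U : Set (Euc d)) (hU : IsOpen U)
    (φ : Euc d → ℝ) (hφ : ContDiffOn ℝ 3 φ U)
    (x : Euc d) (hx : x ∈ U) (hgrad : gradient φ x ≠ 0)
    (k : ℝ) (hk : 0 ≤ k) :
    ∃ C > (0:ℝ), ∃ ε₀ > (0:ℝ), ∀ ε : ℝ, 0 < ε → ε < ε₀ →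
      closedBall x ((1 + k) * ε) ⊆ U →
      ∀ yh ∈ closedBall (0 : Euc d) 1,
        |sSup ((fun zh => φ (x + ε • (yh + k • zh))) '' closedBall (0 : Euc d) 1) +
          sInf ((fun zh => φ (x + ε • (yh + k • zh))) '' closedBall (0 : Euc d) 1) -
          2 * φ x - 2 * ε * ⟪gradient φ x, yh⟫ -
          ε ^ 2 * (hessI φ x yh +
            k ^ 2 * ((‖gradient φ x‖ ^ 2)⁻¹ * hessI φ x (gradient φ x)))| ≤ C * ε ^ 3 := by
  have hφx : ContDiffAt ℝ 3 φ x := hφ.contDiffAt (hU.mem_nhds hx)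
  obtain ⟨L, hL, r, hr, hT⟩ := hφx.exists_abs_sub_quadraticModel_le
  set g := gradient φ x
  set B := fderiv ℝ (fderiv ℝ φ) x
  have hB : ∀ v, hessI φ x v = B v v := fun v =>
    inner_fderiv_gradient_apply ((hφx.fderiv_right (m := 2) le_rfl).differentiableAt (by simp)) v v
  set C₀ := 2 * (L * (1 + k) ^ 3 + k * (1 + k) ^ 2 * ‖B‖ ^ 2 / (2 * ‖g‖))
  refine ⟨C₀ + 1, by positivity, r / (1 + k), by positivity, ?_⟩
  intro ε hε hεr _ yh hyh
  have hR : ‖ε • yh‖ + ε * k ≤ ε * (1 + k) := by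
    rw [norm_smul, Real.norm_of_nonneg hε.le]
    nlinarith [mem_closedBall_zero_iff.1 hyh]
  have key := abs_sSup_add_sInf_sub_le_of_taylor hgrad hL.le hT (ε • yh)
    (by positivity : 0 ≤ ε * k) (hR.trans_lt ((lt_div_iff₀ (by positivity)).1 hεr))
  have himage : (fun zh => φ (x + ε • (yh + k • zh))) =
      fun z => φ (x + (ε • yh + (ε * k) • z)) := by
    simp only [smul_add, smul_smul]
  have hbound : 2 * (L * (‖ε • yh‖ + ε * k) ^ 3 +
      ε * k * (‖ε • yh‖ + ε * k) ^ 2 * ‖B‖ ^ 2 / (2 * ‖g‖)) ≤ (C₀ + 1) * ε ^ 3 :=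
    calc _ ≤ 2 * (L * (ε * (1 + k)) ^ 3 +
            ε * k * (ε * (1 + k)) ^ 2 * ‖B‖ ^ 2 / (2 * ‖g‖)) := by
          gcongr
      _ = C₀ * ε ^ 3 := by ring
      _ ≤ (C₀ + 1) * ε ^ 3 := by nlinarith [pow_pos hε 3]
  rw [hB, hB, himage]
  refine (le_of_eq ?_).trans (key.trans hbound)
  congr 1
  simp only [map_smul, smul_apply, smul_eq_mul, real_inner_smul_right]
  ring
end
end
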